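/- arXiv:2003.06265 — 10 statements merged into one kernel-verified Lean document; each statement's English description precedes it below -/
import Mathlib

section
/- (Fundamental Theorem of Language Change.) Let a₁, a₂ > 0 and let f : [0,1] → [0,1] be the two-grammar Variational Learning map f(p) = a₁p / (a₁p + a₂(1−p)). If a₁ > a₂, then for every initial state p₀ with 0 < p₀ ≤ 1 the iterates fⁿ(p₀) converge to 1 as n → ∞ (grammar G₁ wins in diachrony). If a₁ < a₂, then for every initial state p₀ with 0 ≤ p₀ < 1 the iterates fⁿ(p₀) converge to 0 as n → ∞ (grammar G₂ wins in diachrony). -/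
open Filter Topology

/-! The iterates have the closed form `fⁿ(p) = a₁ⁿ p / (a₁ⁿ p + a₂ⁿ (1 - p))`. Dividing through by the
larger of `a₁ⁿ`, `a₂ⁿ` leaves a geometric sequence with ratio below `1` in the denominator, so the
grammar with the larger advantage takes over; for `a₁ < a₂` apply this to `1 - fⁿ(p)`, which has the
same form with the roles of the two grammars exchanged. -/

lemma mul_add_mul_one_sub_pos {x y t : ℝ} (hx : 0 < x) (hy : 0 < y) (ht₀ : 0 ≤ t) (ht₁ : t ≤ 1) :
    0 < x * t + y * (1 - t) := by
  nlinarith [mul_nonneg hx.le ht₀, mul_nonneg hy.le (sub_nonneg.2 ht₁), mul_pos hx hy]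

lemma iterate_eq_pow_mul_div_pow_mul_add {a₁ a₂ : ℝ} (ha₁ : 0 < a₁) (ha₂ : 0 < a₂) {f : ℝ → ℝ}
    (hf : ∀ p, f p = a₁ * p / (a₁ * p + a₂ * (1 - p))) {p : ℝ} (hp₀ : 0 ≤ p) (hp₁ : p ≤ 1)
    (n : ℕ) : f^[n] p = a₁ ^ n * p / (a₁ ^ n * p + a₂ ^ n * (1 - p)) := by
  induction n with
  | zero => simp
  | succ n ih =>
    have := mul_add_mul_one_sub_pos (pow_pos ha₁ n) (pow_pos ha₂ n) hp₀ hp₁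
    rw [Function.iterate_succ_apply', ih, hf]
    field_simp
    ring

lemma one_sub_iterate_eq_pow_mul_div_pow_mul_add {a₁ a₂ : ℝ} (ha₁ : 0 < a₁) (ha₂ : 0 < a₂)
    {f : ℝ → ℝ} (hf : ∀ p, f p = a₁ * p / (a₁ * p + a₂ * (1 - p))) {p : ℝ} (hp₀ : 0 ≤ p) (hp₁ : p ≤ 1)
    (n : ℕ) : 1 - f^[n] p = a₂ ^ n * (1 - p) / (a₂ ^ n * (1 - p) + a₁ ^ n * p) := by
  have := mul_add_mul_one_sub_pos (pow_pos ha₁ n) (pow_pos ha₂ n) hp₀ hp₁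
  rw [iterate_eq_pow_mul_div_pow_mul_add ha₁ ha₂ hf hp₀ hp₁, add_comm (a₂ ^ n * _)]
  field_simp
  ring

lemma tendsto_pow_mul_div_pow_mul_add {a b u v : ℝ} (hba : |b| < a) (hu : u ≠ 0) :
    Tendsto (fun n : ℕ => a ^ n * u / (a ^ n * u + b ^ n * v)) atTop (𝓝 1) := by
  have ha : 0 < a := (abs_nonneg b).trans_lt hba
  have hr : Tendsto (fun n : ℕ => (b / a) ^ n) atTop (𝓝 0) :=
    tendsto_pow_atTop_nhds_zero_of_abs_lt_one <| by rwa [abs_div, abs_of_pos ha, div_lt_one ha]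
  have hlim : Tendsto (fun n : ℕ => u / (u + (b / a) ^ n * v)) atTop (𝓝 (u / (u + 0 * v))) :=
    tendsto_const_nhds.div (tendsto_const_nhds.add (hr.mul_const v)) (by simpa using hu)
  rw [zero_mul, add_zero, div_self hu] at hlim
  refine hlim.congr fun n => ?_
  rw [div_pow, ← mul_div_mul_left u _ (pow_ne_zero n ha.ne')]
  field_simp

theorem stmt_2 (a₁ a₂ : ℝ) (ha₁ : 0 < a₁) (ha₂ : 0 < a₂)
    (f : ℝ → ℝ) (hf : ∀ p, f p = a₁ * p / (a₁ * p + a₂ * (1 - p))) :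
    (a₂ < a₁ → ∀ p₀ : ℝ, 0 < p₀ → p₀ ≤ 1 →
      Tendsto (fun n => f^[n] p₀) atTop (𝓝 1)) ∧
    (a₁ < a₂ → ∀ p₀ : ℝ, 0 ≤ p₀ → p₀ < 1 →
      Tendsto (fun n => f^[n] p₀) atTop (𝓝 0)) := by
  constructor
  · intro h p₀ hp₀ hp₁
    simp_rw [iterate_eq_pow_mul_div_pow_mul_add ha₁ ha₂ hf hp₀.le hp₁]
    exact tendsto_pow_mul_div_pow_mul_add (by rwa [abs_of_pos ha₂]) hp₀.ne'
  · intro h p₀ hp₀ hp₁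
    have hc : Tendsto (fun n => 1 - f^[n] p₀) atTop (𝓝 1) := by
      simp_rw [one_sub_iterate_eq_pow_mul_div_pow_mul_add ha₁ ha₂ hf hp₀ hp₁.le]
      exact tendsto_pow_mul_div_pow_mul_add (by rwa [abs_of_pos ha₁]) (sub_ne_zero.2 hp₁.ne')
    simpa using (tendsto_const_nhds (x := (1 : ℝ))).sub hc
end

section
/- No two-grammar system admits stable variation: for all advantages a₁, a₂ > 0, there is no point p with 0 < p < 1 that is both a fixed point of the two-grammar Variational Learning map f(p) = a₁p / (a₁p + a₂(1−p)) and asymptotically stable. (If a₁ ≠ a₂ there are no interior fixed points at all; if a₁ = a₂ every interior point is fixed but none is asymptotically stable.) -/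
/-!
At an interior fixed point `p` the equation `a₁ p = p (a₁ p + a₂ (1 - p))` forces `a₁ = a₂`, and
then the map is the identity. Every point near `p` is then fixed, so the orbits starting at
points `q ≠ p` arbitrarily close to `p` stay at `q` and do not converge to `p`.
-/

open Filter Topology

theorem not_forall_tendsto_iterate_of_eventually_isFixedPt {X : Type*} [TopologicalSpace X]
    [T2Space X] {f : X → X} {p : X} [(𝓝[≠] p).NeBot] (hfix : ∀ᶠ q in 𝓝 p, Function.IsFixedPt f q)
    {U : Set X} (hU : U ∈ 𝓝 p) : ¬ ∀ q ∈ U, Tendsto (fun n => f^[n] q) atTop (𝓝 p) := by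
  intro hconv
  obtain ⟨q, ⟨hq_fixed, hqU⟩, hqp⟩ :=
    (((hfix.and hU).filter_mono nhdsWithin_le_nhds).and
      (self_mem_nhdsWithin : {p}ᶜ ∈ 𝓝[≠] p)).exists
  have hq_limit := hconv q hqU
  simp only [hq_fixed.iterate, Function.IsFixedPt.eq, tendsto_const_nhds_iff] at hq_limit
  exact hqp hq_limit

noncomputable def variationalMap (a₁ a₂ p : ℝ) : ℝ :=
  a₁ * p / (a₁ * p + a₂ * (1 - p))

namespace variationalMap

theorem self_eq_id {a : ℝ} (ha : a ≠ 0) : variationalMap a a = id := by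
  funext p
  rw [variationalMap, ← mul_add, add_sub_cancel, mul_one, mul_div_cancel_left₀ p ha, id]

theorem ne_zero_of_isFixedPt {a₁ a₂ p : ℝ} (hp : p ≠ 0)
    (h : Function.IsFixedPt (variationalMap a₁ a₂) p) : a₁ ≠ 0 := by
  rintro rfl
  simp [Function.IsFixedPt, variationalMap, eq_comm, hp] at h

theorem eq_of_isFixedPt {a₁ a₂ p : ℝ} (hp₀ : 0 < p) (hp₁ : p < 1)
    (h : Function.IsFixedPt (variationalMap a₁ a₂) p) : a₁ = a₂ := by
  have hfix : a₁ * p / (a₁ * p + a₂ * (1 - p)) = p := h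
  have hD : a₁ * p + a₂ * (1 - p) ≠ 0 := by
    intro hD
    rw [hD, div_zero] at hfix
    exact hp₀.ne hfix
  rw [div_eq_iff hD] at hfix
  have ha₁ : a₁ = a₁ * p + a₂ * (1 - p) := mul_left_cancel₀ hp₀.ne' (by linarith)
  have hprod : (1 - p) * (a₁ - a₂) = 0 := by linear_combination ha₁
  linarith [(mul_eq_zero.mp hprod).resolve_left (by linarith)]

end variationalMap

theorem stmt_3_general (a₁ a₂ : ℝ)
    (f : ℝ → ℝ) (hf : ∀ p, f p = a₁ * p / (a₁ * p + a₂ * (1 - p))) :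
    ¬ ∃ p : ℝ, 0 < p ∧ p < 1 ∧ f p = p ∧
      ∃ U ∈ 𝓝[Set.Icc (0 : ℝ) 1] p, ∀ q ∈ U,
        Tendsto (fun n => f^[n] q) atTop (𝓝 p) := by
  rintro ⟨p, hp₀, hp₁, hfp, U, hU, hconv⟩
  obtain rfl : f = variationalMap a₁ a₂ := funext hf
  obtain rfl := variationalMap.eq_of_isFixedPt hp₀ hp₁ hfp
  have hid := variationalMap.self_eq_id (variationalMap.ne_zero_of_isFixedPt hp₀.ne' hfp)
  rw [nhdsWithin_eq_nhds.mpr (Icc_mem_nhds hp₀ hp₁)] at hU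
  refine not_forall_tendsto_iterate_of_eventually_isFixedPt (.of_forall fun q => ?_) hU hconv
  rw [hid]
  rfl

theorem stmt_3 (a₁ a₂ : ℝ) (ha₁ : 0 < a₁) (ha₂ : 0 < a₂)
    (f : ℝ → ℝ) (hf : ∀ p, f p = a₁ * p / (a₁ * p + a₂ * (1 - p))) :
    ¬ ∃ p : ℝ, 0 < p ∧ p < 1 ∧ f p = p ∧
      ∃ U ∈ 𝓝[Set.Icc (0 : ℝ) 1] p, ∀ q ∈ U,
        Tendsto (fun n => f^[n] q) atTop (𝓝 p) :=
  stmt_3_general a₁ a₂ f hf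
end

section
/- Let A = (a_{ij}) be a proper 3×3 advantage matrix and let F : S₃ → S₃ be the associated Variational Learning dynamics. If p ∈ S₃ lies on the boundary of the simplex (i.e. p_i = 0 for some i) and F(p) = p, then p is one of the vertices v₁ = (1,0,0), v₂ = (0,1,0), v₃ = (0,0,1). In other words, the vertices are the only fixed points on the boundary of S₃. -/
open Finset Filter Topology

/-- The simplex `S₃` of probability vectors over three grammars. -/
def simplex3 : Set (Fin 3 → ℝ) :=
  {p | (∀ i, 0 ≤ p i) ∧ ∑ i, p i = 1}

/-- The penalty probability `c_i(p) = ∑_{j ≠ i} a_{ij} p_j`. -/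
def penalty (A : Matrix (Fin 3) (Fin 3) ℝ) (p : Fin 3 → ℝ) (i : Fin 3) : ℝ :=
  ∑ j ∈ Finset.univ.filter (fun j => j ≠ i), A i j * p j

/-- The Variational Learning dynamics
`F_i(p) = ∏_{j ≠ i} c_j(p) / ∑_m ∏_{k ≠ m} c_k(p)`. -/
noncomputable def VLdyn (A : Matrix (Fin 3) (Fin 3) ℝ) (p : Fin 3 → ℝ) (i : Fin 3) : ℝ :=
  (∏ j ∈ Finset.univ.filter (fun j => j ≠ i), penalty A p j) /
    (∑ m, ∏ k ∈ Finset.univ.filter (fun k => k ≠ m), penalty A p k)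

/-- The vertex `v_i` of the simplex, i.e. the state of total dominance of grammar `G_i`. -/
def vertex (i : Fin 3) : Fin 3 → ℝ := fun j => if j = i then 1 else 0


lemma third3 : ∀ i j : Fin 3, i ≠ j → ∃ k : Fin 3, k ≠ i ∧ k ≠ j := by decide

theorem stmt_8 (A : Matrix (Fin 3) (Fin 3) ℝ)
    (hdiag : ∀ i, A i i = 0) (hproper : ∀ i j, i ≠ j → 0 < A i j)
    (p : Fin 3 → ℝ) (hp : p ∈ simplex3) (hbd : ∃ i, p i = 0)
    (hfix : VLdyn A p = p) :
    ∃ i : Fin 3, p = vertex i := by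
  obtain ⟨hpos, hsum⟩ := hp
  have pen_nonneg : ∀ j, 0 ≤ penalty A p j := by
    intro j
    apply Finset.sum_nonneg
    intro m _
    have hA : 0 ≤ A j m := by
      rcases eq_or_ne j m with h | h
      · simp [h, hdiag]
      · exact le_of_lt (hproper j m h)
    exact mul_nonneg hA (hpos m)
  have pen_pos : ∀ j m : Fin 3, m ≠ j → 0 < p m → 0 < penalty A p j := by
    intro j m hmj hpm
    apply Finset.sum_pos'
    · intro k hk
      have hk' : k ≠ j := by simpa using hk
      have hA : 0 ≤ A j k := le_of_lt (hproper j k (Ne.symm hk'))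
      exact mul_nonneg hA (hpos k)
    · exact ⟨m, by simp [hmj], mul_pos (hproper j m (Ne.symm hmj)) hpm⟩
  have key : ∃ i j : Fin 3, i ≠ j ∧ p i = 0 ∧ p j = 0 := by
    obtain ⟨i, hi⟩ := hbd
    by_contra hcon
    push_neg at hcon
    have hothers : ∀ j, j ≠ i → 0 < p j := by
      intro j hj
      rcases lt_or_eq_of_le (hpos j) with h | h
      · exact h
      · exact absurd h.symm (hcon i j (Ne.symm hj) hi)
    have hnum : 0 < ∏ j ∈ Finset.univ.filter (fun j => j ≠ i), penalty A p j := by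
      apply Finset.prod_pos
      intro j hj
      have hj' : j ≠ i := by simpa using hj
      obtain ⟨k, hki, hkj⟩ := third3 i j (Ne.symm hj')
      exact pen_pos j k hkj (hothers k hki)
    have hden : 0 < ∑ m, ∏ k ∈ Finset.univ.filter (fun k => k ≠ m), penalty A p k := by
      apply Finset.sum_pos'
      · intro m _
        exact Finset.prod_nonneg (fun k _ => pen_nonneg k)
      · exact ⟨i, Finset.mem_univ i, hnum⟩
    have hvi : VLdyn A p i = p i := congrFun hfix i
    have hvpos : 0 < VLdyn A p i := div_pos hnum hden
    rw [hvi, hi] at hvpos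
    exact lt_irrefl 0 hvpos
  obtain ⟨i, j, hij, hi, hj⟩ := key
  rw [Fin.sum_univ_three] at hsum
  fin_cases i <;> fin_cases j <;>
    first
    | exact absurd rfl hij
    | (refine ⟨0, funext fun m => ?_⟩; fin_cases m <;> simp_all [vertex]; done)
    | (refine ⟨1, funext fun m => ?_⟩; fin_cases m <;> simp_all [vertex]; done)
    | (refine ⟨2, funext fun m => ?_⟩; fin_cases m <;> simp_all [vertex]; done)
end

section
/- Let A = (a_{ij}) be a proper 3×3 advantage matrix, let F : S₃ → S₃ be the associated Variational Learning dynamics, and let p lie in the interior of S₃ (0 < p_i < 1 for all i). Then p is a fixed point of F if and only if c₁(p)·p₁ = c₂(p)·p₂ = c₃(p)·p₃, where c_i(p) = Σ_{j≠i} a_{ij} p_j are the penalty probabilities. -/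
open Finset Filter Topology

theorem stmt_9 (A : Matrix (Fin 3) (Fin 3) ℝ)
    (hdiag : ∀ i, A i i = 0) (hproper : ∀ i j, i ≠ j → 0 < A i j)
    (p : Fin 3 → ℝ) (hp : p ∈ simplex3) (hint : ∀ i, 0 < p i ∧ p i < 1) :
    VLdyn A p = p ↔
      (penalty A p 0 * p 0 = penalty A p 1 * p 1 ∧
       penalty A p 1 * p 1 = penalty A p 2 * p 2) := by
  obtain ⟨hp0, hpsum⟩ := hp
  rw [Fin.sum_univ_three] at hpsum
  have e0 : penalty A p 0 = A 0 1 * p 1 + A 0 2 * p 2 := by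
    simp [penalty, Finset.sum_filter, Fin.sum_univ_three]
  have e1 : penalty A p 1 = A 1 0 * p 0 + A 1 2 * p 2 := by
    simp [penalty, Finset.sum_filter, Fin.sum_univ_three]
  have e2 : penalty A p 2 = A 2 0 * p 0 + A 2 1 * p 1 := by
    simp [penalty, Finset.sum_filter, Fin.sum_univ_three]
  set c0 := penalty A p 0 with hc0
  set c1 := penalty A p 1 with hc1
  set c2 := penalty A p 2 with hc2
  have hq0 := (hint 0).1
  have hq1 := (hint 1).1
  have hq2 := (hint 2).1
  have hcp0 : 0 < c0 := by
    rw [e0]; have := hproper 0 1 (by decide); have := hproper 0 2 (by decide); positivity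
  have hcp1 : 0 < c1 := by
    rw [e1]; have := hproper 1 0 (by decide); have := hproper 1 2 (by decide); positivity
  have hcp2 : 0 < c2 := by
    rw [e2]; have := hproper 2 0 (by decide); have := hproper 2 1 (by decide); positivity
  have P0 : ∏ j ∈ Finset.univ.filter (fun j => j ≠ (0:Fin 3)), penalty A p j = c1 * c2 := by
    simp [Finset.prod_filter, Fin.prod_univ_three, ← hc1, ← hc2]
  have P1 : ∏ j ∈ Finset.univ.filter (fun j => j ≠ (1:Fin 3)), penalty A p j = c0 * c2 := by
    simp [Finset.prod_filter, Fin.prod_univ_three, ← hc0, ← hc2]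
  have P2 : ∏ j ∈ Finset.univ.filter (fun j => j ≠ (2:Fin 3)), penalty A p j = c0 * c1 := by
    simp [Finset.prod_filter, Fin.prod_univ_three, ← hc0, ← hc1]
  have hS : (∑ m, ∏ k ∈ Finset.univ.filter (fun k => k ≠ m), penalty A p k)
      = c1 * c2 + c0 * c2 + c0 * c1 := by
    rw [Fin.sum_univ_three, P0, P1, P2]
  set S := c1 * c2 + c0 * c2 + c0 * c1 with hSdef
  have hSpos : 0 < S := by positivity
  have V0 : VLdyn A p 0 = c1 * c2 / S := by rw [VLdyn, P0, hS]
  have V1 : VLdyn A p 1 = c0 * c2 / S := by rw [VLdyn, P1, hS]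
  have V2 : VLdyn A p 2 = c0 * c1 / S := by rw [VLdyn, P2, hS]
  constructor
  · intro h
    have h0 : c1 * c2 / S = p 0 := by rw [← V0, h]
    have h1 : c0 * c2 / S = p 1 := by rw [← V1, h]
    have h2 : c0 * c1 / S = p 2 := by rw [← V2, h]
    constructor
    · rw [← h0, ← h1]; ring
    · rw [← h1, ← h2]; ring
  · rintro ⟨h1, h2⟩
    funext i
    fin_cases i
    · show VLdyn A p 0 = p 0
      rw [V0, div_eq_iff hSpos.ne']
      linear_combination (-(c1*c2))*hpsum + (-c2 - c1)*h1 + (-c1)*h2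
    · show VLdyn A p 1 = p 1
      rw [V1, div_eq_iff hSpos.ne']
      linear_combination (-(c0*c2))*hpsum + c2*h1 + (-c0)*h2
    · show VLdyn A p 2 = p 2
      rw [V2, div_eq_iff hSpos.ne']
      linear_combination (-(c0*c1))*hpsum + c1*h1 + (c0 + c1)*h2
end

section
/- Let A be a Babelian 3×3 advantage matrix (a_{ij} = a > 0 for all i ≠ j) and let F : S₃ → S₃ be the associated Variational Learning dynamics. Then the interior fixed point (1/3, 1/3, 1/3) is asymptotically stable: there exists a relative neighbourhood U of (1/3, 1/3, 1/3) in S₃ such that for every q ∈ U the iterates Fⁿ(q) converge to (1/3, 1/3, 1/3) as n → ∞. -/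
open Finset Filter Topology

/-!
For a Babelian matrix the penalties are `c_i = a (1 - p_i)` on the simplex, and dividing
numerator and denominator of `F_i` by `∏ c_k` shows that `F_i(p) = c_i⁻¹ / ∑ₘ cₘ⁻¹`: the
dynamics hands out shares proportional to the inverse penalties. Writing `p = 1/3 + x`, a direct
estimate gives `‖F p - 1/3‖∞ ≤ 3/5 ‖p - 1/3‖∞` on the sup-norm ball of radius `1/10`, so the
iterates converge geometrically to the centre.
-/

theorem tendsto_iterate_of_dist_le_mul {X : Type*} [PseudoMetricSpace X] {f : X → X}
    {s : Set X} {p : X} {r k : ℝ} (hk₀ : 0 ≤ k) (hk₁ : k < 1)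
    (hmaps : Set.MapsTo f (s ∩ Metric.closedBall p r) s)
    (hcontr : ∀ q ∈ s ∩ Metric.closedBall p r, dist (f q) p ≤ k * dist q p)
    {q : X} (hq : q ∈ s ∩ Metric.closedBall p r) :
    Tendsto (fun n => f^[n] q) atTop (𝓝 p) := by
  have horbit : ∀ n, f^[n] q ∈ s ∩ Metric.closedBall p r ∧ dist (f^[n] q) p ≤ k ^ n * dist q p := by
    intro n
    induction n with
    | zero => simpa using hq
    | succ n ih =>
      obtain ⟨hmem, hdist⟩ := ih
      rw [Function.iterate_succ_apply']
      refine ⟨⟨hmaps hmem, ?_⟩, ?_⟩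
      · have hr := Metric.mem_closedBall.1 hmem.2
        rw [Metric.mem_closedBall]
        nlinarith [hcontr _ hmem, dist_nonneg (x := f^[n] q) (y := p)]
      · calc dist (f (f^[n] q)) p ≤ k * dist (f^[n] q) p := hcontr _ hmem
          _ ≤ k * (k ^ n * dist q p) := mul_le_mul_of_nonneg_left hdist hk₀
          _ = k ^ (n + 1) * dist q p := by ring
  rw [tendsto_iff_dist_tendsto_zero]
  refine squeeze_zero (fun _ => dist_nonneg) (fun n => (horbit n).2) ?_
  simpa using (tendsto_pow_atTop_nhds_zero_of_lt_one hk₀ hk₁).mul_const (dist q p)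

theorem prod_erase_div_sum_prod_erase {ι K : Type*} [Fintype ι] [DecidableEq ι] [Field K]
    {c : ι → K} (hc : ∀ i, c i ≠ 0) (i : ι) :
    (∏ j ∈ univ.erase i, c j) / ∑ m, ∏ k ∈ univ.erase m, c k = (c i)⁻¹ / ∑ m, (c m)⁻¹ := by
  have hprod : ∀ m, ∏ k ∈ univ.erase m, c k = (∏ k, c k) * (c m)⁻¹ := fun m => by
    rw [eq_mul_inv_iff_mul_eq₀ (hc m), prod_erase_mul _ _ (mem_univ m)]
  simp_rw [hprod, ← mul_sum]
  exact mul_div_mul_left _ _ (prod_ne_zero_iff.2 fun j _ => hc j)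

theorem sq_le_sq_of_abs_le {W M : ℝ} (h : |W| ≤ M) : W ^ 2 ≤ M ^ 2 :=
  sq_le_sq' (abs_le.1 h).1 (abs_le.1 h).2

theorem abs_sq_add_mul_le {M X Y Z : ℝ} (hM : M ≤ 1/10) (hX : |X| ≤ M) (hY : |Y| ≤ M)
    (hZ : |Z| ≤ M) :
    |2 * X + X ^ 2 + 2 * (Y * Z)| ≤ 3/5 * M * (4 - 3/2 * (X ^ 2 + Y ^ 2 + Z ^ 2)) := by
  have hM₀ : 0 ≤ M := (abs_nonneg X).trans hX
  have hYZ : |Y * Z| ≤ M ^ 2 := by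
    rw [abs_mul, sq]; exact mul_le_mul hY hZ (abs_nonneg Z) hM₀
  calc |2 * X + X ^ 2 + 2 * (Y * Z)| ≤ 2 * |X| + X ^ 2 + 2 * |Y * Z| :=
        (abs_add_three _ _ _).trans_eq (by rw [abs_mul, abs_mul (2 : ℝ), abs_two, abs_sq])
    _ ≤ 3/5 * M * (4 - 3/2 * (3 * M ^ 2)) := by nlinarith [sq_le_sq_of_abs_le hX]
    _ ≤ 3/5 * M * (4 - 3/2 * (X ^ 2 + Y ^ 2 + Z ^ 2)) := by
        gcongr; linarith [sq_le_sq_of_abs_le hX, sq_le_sq_of_abs_le hY, sq_le_sq_of_abs_le hZ]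

theorem abs_inv_div_sub_third_le {x y z M S : ℝ} (hM : M ≤ 1/10) (hsum : x + y + z = 1)
    (hx : |x - 1/3| ≤ M) (hy : |y - 1/3| ≤ M) (hz : |z - 1/3| ≤ M)
    (hS : S = (1 - x)⁻¹ + (1 - y)⁻¹ + (1 - z)⁻¹) :
    |(1 - x)⁻¹ / S - 1/3| ≤ 3/5 * M := by
  have hpos : ∀ {w : ℝ}, |w - 1/3| ≤ M → 0 < 1 - w := fun hw => by
    linarith [(abs_le.1 hw).2]
  have hx₀ := hpos hx
  have hy₀ := hpos hy
  have hz₀ := hpos hz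
  have hD : 0 < 4 - 3/2 * ((x - 1/3) ^ 2 + (y - 1/3) ^ 2 + (z - 1/3) ^ 2) := by
    nlinarith [sq_le_sq_of_abs_le hx, sq_le_sq_of_abs_le hy, sq_le_sq_of_abs_le hz]
  have hS' : S = ((1 - y) * (1 - z) + (1 - x) * (1 - z) + (1 - x) * (1 - y)) /
      ((1 - x) * (1 - y) * (1 - z)) := by
    rw [hS]; field_simp
  -- `4 - 3/2 ∑ (x_j - 1/3)²` is `3 ∑_{j<k} (1 - x_j)(1 - x_k)` on the plane `x + y + z = 1`
  have hform : (1 - x)⁻¹ / S - 1/3 =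
      (2 * (x - 1/3) + (x - 1/3) ^ 2 + 2 * ((y - 1/3) * (z - 1/3))) /
        (4 - 3/2 * ((x - 1/3) ^ 2 + (y - 1/3) ^ 2 + (z - 1/3) ^ 2)) := by
    rw [eq_div_iff hD.ne', hS']
    field_simp
    obtain rfl : z = 1 - x - y := by linarith
    ring
  rw [hform, abs_div, abs_of_pos hD, div_le_iff₀ hD]
  exact abs_sq_add_mul_le hM hx hy hz

section Babelian

variable {a : ℝ} {A : Matrix (Fin 3) (Fin 3) ℝ}

theorem penalty_eq_of_offDiag_eq (hA : ∀ i j, i ≠ j → A i j = a) (p : Fin 3 → ℝ) (i : Fin 3) :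
    penalty A p i = a * (∑ j, p j - p i) := by
  rw [penalty, filter_ne', ← sum_erase_eq_sub (mem_univ i), mul_sum]
  exact sum_congr rfl fun j hj => by rw [hA i j (ne_of_mem_erase hj).symm]

theorem VLdyn_eq_inv_div_sum_inv (ha : a ≠ 0) (hA : ∀ i j, i ≠ j → A i j = a)
    {p : Fin 3 → ℝ} (hp : ∀ i, p i ≠ 1) (hsum : ∑ i, p i = 1) (i : Fin 3) :
    VLdyn A p i = (1 - p i)⁻¹ / ∑ m, (1 - p m)⁻¹ := by
  have hc : ∀ j, penalty A p j ≠ 0 := fun j => by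
    rw [penalty_eq_of_offDiag_eq hA, hsum]
    exact mul_ne_zero ha (sub_ne_zero.2 (hp j).symm)
  simp_rw [VLdyn, filter_ne']
  rw [prod_erase_div_sum_prod_erase hc]
  simp_rw [penalty_eq_of_offDiag_eq hA, hsum, mul_inv, ← mul_sum]
  exact mul_div_mul_left _ _ (inv_ne_zero ha)

theorem abs_VLdyn_sub_third_le (ha : a ≠ 0) (hA : ∀ i j, i ≠ j → A i j = a)
    {p : Fin 3 → ℝ} {M : ℝ} (hM : M ≤ 1/10) (hsum : ∑ i, p i = 1)
    (hpM : ∀ i, |p i - 1/3| ≤ M) (i : Fin 3) :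
    |VLdyn A p i - 1/3| ≤ 3/5 * M := by
  have hp : ∀ i, p i ≠ 1 := fun i => by linarith [(abs_le.1 (hpM i)).2]
  rw [VLdyn_eq_inv_div_sum_inv ha hA hp hsum, Fin.sum_univ_three]
  rw [Fin.sum_univ_three] at hsum
  obtain rfl | rfl | rfl : i = 0 ∨ i = 1 ∨ i = 2 := by fin_cases i <;> simp
  · exact abs_inv_div_sub_third_le hM hsum (hpM 0) (hpM 1) (hpM 2) rfl
  · exact abs_inv_div_sub_third_le hM (by linarith) (hpM 1) (hpM 0) (hpM 2) (by ring)
  · exact abs_inv_div_sub_third_le hM (by linarith) (hpM 2) (hpM 0) (hpM 1) (by ring)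

theorem sum_VLdyn_eq_one (ha : a ≠ 0) (hA : ∀ i j, i ≠ j → A i j = a)
    {p : Fin 3 → ℝ} (hp : ∀ i, p i < 1) (hsum : ∑ i, p i = 1) :
    ∑ i, VLdyn A p i = 1 := by
  simp_rw [VLdyn_eq_inv_div_sum_inv ha hA (fun i => (hp i).ne) hsum, ← sum_div]
  exact div_self (sum_pos (fun i _ => inv_pos.2 (sub_pos.2 (hp i))) univ_nonempty).ne'

theorem sum_VLdyn_eq_one_and_dist_VLdyn_le (ha : a ≠ 0) (hA : ∀ i j, i ≠ j → A i j = a) {p : Fin 3 → ℝ}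
    (hsum : ∑ i, p i = 1) (hp : dist p (fun _ => 1/3) ≤ 1/10) :
    ∑ i, VLdyn A p i = 1 ∧ dist (VLdyn A p) (fun _ => 1/3) ≤ 3/5 * dist p (fun _ => 1/3) := by
  have hpM : ∀ i, |p i - 1/3| ≤ dist p (fun _ => 1/3) := fun i => by
    simpa only [Real.dist_eq] using dist_le_pi_dist p (fun _ => 1/3) i
  refine ⟨sum_VLdyn_eq_one ha hA (fun i => ?_) hsum, ?_⟩
  · linarith [(abs_le.1 ((hpM i).trans hp)).2]
  · exact (dist_pi_le_iff (by positivity)).2 fun i => abs_VLdyn_sub_third_le ha hA hp hsum hpM i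

end Babelian

theorem stmt_11_general (a : ℝ) (ha : 0 < a) (A : Matrix (Fin 3) (Fin 3) ℝ)
    (hA : ∀ i j, i ≠ j → A i j = a) :
    ∃ U ∈ 𝓝[simplex3] ![(1 : ℝ)/3, 1/3, 1/3], ∀ q ∈ U,
      Tendsto (fun n => (VLdyn A)^[n] q) atTop (𝓝 ![(1 : ℝ)/3, 1/3, 1/3]) := by
  have hcentre : ![(1 : ℝ)/3, 1/3, 1/3] = fun _ => 1/3 := by
    ext i; fin_cases i <;> rfl
  have hstep := fun q (hq : q ∈ {q : Fin 3 → ℝ | ∑ i, q i = 1} ∩ Metric.closedBall _ (1/10)) =>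
    sum_VLdyn_eq_one_and_dist_VLdyn_le ha.ne' hA hq.1 hq.2
  rw [hcentre]
  refine ⟨simplex3 ∩ Metric.closedBall _ (1/10),
    inter_mem_nhdsWithin _ (Metric.closedBall_mem_nhds _ (by norm_num)), fun q hq => ?_⟩
  exact tendsto_iterate_of_dist_le_mul (by norm_num) (by norm_num)
    (fun q hq => (hstep q hq).1) (fun q hq => (hstep q hq).2) ⟨hq.1.2, hq.2⟩

theorem stmt_11 (a : ℝ) (ha : 0 < a) (A : Matrix (Fin 3) (Fin 3) ℝ)
    (hdiag : ∀ i, A i i = 0) (hA : ∀ i j, i ≠ j → A i j = a) :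
    ∃ U ∈ 𝓝[simplex3] ![(1 : ℝ)/3, 1/3, 1/3], ∀ q ∈ U,
      Tendsto (fun n => (VLdyn A)^[n] q) atTop (𝓝 ![(1 : ℝ)/3, 1/3, 1/3]) :=
  stmt_11_general a ha A hA
end

section
/- Let A be a Babelian 3×3 advantage matrix (a_{ij} = a > 0 for all i ≠ j) and let F : S₃ → S₃ be the associated Variational Learning dynamics. Then none of the vertex fixed points v₁ = (1,0,0), v₂ = (0,1,0), v₃ = (0,0,1) is asymptotically stable: for each vertex v_i and every relative neighbourhood U of v_i in S₃, there exists q ∈ U such that the iterates Fⁿ(q) do not converge to v_i. -/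
open Finset Filter Topology

/-!
For a Babelian matrix, `c_j(p) = a (1 - p_j)` on the simplex. Hence the line on which the two
coordinates other than `p_i` agree is invariant, and `F` acts on the coordinate `x = p_i` by
`g x = (1 + x) / (5 - 3x)`. Since `x - g x = (3x - 1)(1 - x) / (5 - 3x) ≥ 0` on `[1/3, 1]` and `g` is
increasing, an orbit starting at `x ∈ [1/3, 1)` keeps `p_i ≤ x < 1`, so it cannot reach `v_i`, although
such starting points come arbitrarily close to `v_i`.
-/

noncomputable def balancedPoint (i : Fin 3) (x : ℝ) : Fin 3 → ℝ :=
  fun j => if j = i then x else (1 - x) / 2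

noncomputable def balancedDyn (x : ℝ) : ℝ := (1 + x) / (5 - 3 * x)

theorem balancedPoint_one (i : Fin 3) : balancedPoint i 1 = vertex i := by
  funext j
  by_cases hj : j = i <;> simp [balancedPoint, vertex, hj]

theorem sum_balancedPoint (i : Fin 3) (x : ℝ) : ∑ j, balancedPoint i x j = 1 := by
  fin_cases i <;> simp [balancedPoint, Fin.sum_univ_three] <;> ring

theorem balancedPoint_mem_simplex3 (i : Fin 3) {x : ℝ} (hx : x ∈ Set.Icc (0 : ℝ) 1) :
    balancedPoint i x ∈ simplex3 := by
  refine ⟨fun j => ?_, ?_⟩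
  · by_cases hj : j = i <;> simp only [balancedPoint, hj, if_true, if_false] <;> linarith [hx.1, hx.2]
  · exact sum_balancedPoint i x

theorem continuous_balancedPoint (i : Fin 3) : Continuous (balancedPoint i) :=
  continuous_pi fun j => by
    by_cases hj : j = i <;> simp only [balancedPoint, hj, if_true, if_false] <;> fun_prop

theorem tendsto_balancedPoint_nhdsLT_one (i : Fin 3) :
    Tendsto (balancedPoint i) (𝓝[<] 1) (𝓝[simplex3] (vertex i)) := by
  refine tendsto_nhdsWithin_iff.mpr ⟨?_, ?_⟩
  · rw [← balancedPoint_one]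
    exact (continuous_balancedPoint i).continuousAt.tendsto.mono_left nhdsWithin_le_nhds
  · filter_upwards [Ioo_mem_nhdsLT (zero_lt_one' ℝ)] with x hx
    exact balancedPoint_mem_simplex3 i (Set.Ioo_subset_Icc_self hx)

theorem penalty_eq_of_forall_ne {a : ℝ} {A : Matrix (Fin 3) (Fin 3) ℝ}
    (hA : ∀ i j, i ≠ j → A i j = a) {p : Fin 3 → ℝ} (hp : ∑ j, p j = 1) (i : Fin 3) :
    penalty A p i = a * (1 - p i) := by
  rw [penalty, Finset.filter_ne', Finset.sum_congr rfl fun j hj => by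
    rw [hA i j (Finset.ne_of_mem_erase hj).symm], ← Finset.mul_sum,
    Finset.sum_erase_eq_sub (Finset.mem_univ i), hp]

section Babelian

variable {a : ℝ} {A : Matrix (Fin 3) (Fin 3) ℝ} (hA : ∀ i j, i ≠ j → A i j = a) (i : Fin 3) (x : ℝ)

include hA

theorem prod_penalty_balancedPoint (j : Fin 3) :
    ∏ k ∈ univ.filter (fun k => k ≠ j), penalty A (balancedPoint i x) k
      = if j = i then (a * (1 + x) / 2) ^ 2 else a * (1 - x) * (a * (1 + x) / 2) := by
  simp only [penalty_eq_of_forall_ne hA (sum_balancedPoint i x), Finset.prod_filter,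
    Fin.prod_univ_three, balancedPoint]
  fin_cases i <;> fin_cases j <;>
    simp only [Fin.reduceFinMk, Fin.isValue, Fin.reduceEq, ne_eq, not_true_eq_false,
      not_false_eq_true, if_true, if_false] <;> ring

theorem sum_prod_penalty_balancedPoint :
    ∑ m, ∏ k ∈ univ.filter (fun k => k ≠ m), penalty A (balancedPoint i x) k
      = a ^ 2 * (1 + x) * (5 - 3 * x) / 4 := by
  simp only [Fin.sum_univ_three, prod_penalty_balancedPoint hA i x]
  fin_cases i <;> simp only [Fin.reduceFinMk, Fin.isValue, Fin.reduceEq, if_true, if_false] <;> ring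

theorem VLdyn_balancedPoint (ha : 0 < a) (hx : x ∈ Set.Icc (0 : ℝ) 1) :
    VLdyn A (balancedPoint i x) = balancedPoint i (balancedDyn x) := by
  have h5 : 5 - 3 * x ≠ 0 := by linarith [hx.2]
  have h1 : 1 + x ≠ 0 := by linarith [hx.1]
  funext j
  rw [VLdyn, prod_penalty_balancedPoint hA i x, sum_prod_penalty_balancedPoint hA i x,
    balancedPoint, balancedDyn]
  split_ifs
  · field_simp
    ring
  · rw [one_sub_div h5]
    field_simp
    ring

end Babelian

theorem mapsTo_balancedDyn {b : ℝ} (hb : b ∈ Set.Icc (1 / 3 : ℝ) 1) :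
    Set.MapsTo balancedDyn (Set.Icc 0 b) (Set.Icc 0 b) := by
  intro x hx
  have h5 : 0 < 5 - 3 * x := by linarith [hx.2, hb.2]
  refine ⟨div_nonneg (by linarith [hx.1]) h5.le, ?_⟩
  rw [balancedDyn, div_le_iff₀ h5]
  nlinarith [hx.1, hx.2, hb.1, hb.2]

theorem iterate_VLdyn_balancedPoint {a : ℝ} (ha : 0 < a) {A : Matrix (Fin 3) (Fin 3) ℝ}
    (hA : ∀ i j, i ≠ j → A i j = a) (i : Fin 3) {x : ℝ} (hx : x ∈ Set.Icc (0 : ℝ) 1) (n : ℕ) :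
    (VLdyn A)^[n] (balancedPoint i x) = balancedPoint i (balancedDyn^[n] x) := by
  induction n with
  | zero => rfl
  | succ n ih =>
    have hmaps := (mapsTo_balancedDyn (by norm_num : (1 : ℝ) ∈ Set.Icc (1 / 3) 1)).iterate n hx
    rw [Function.iterate_succ_apply', ih, VLdyn_balancedPoint hA i _ ha hmaps,
      ← Function.iterate_succ_apply' balancedDyn]

theorem stmt_12_general (a : ℝ) (ha : 0 < a) (A : Matrix (Fin 3) (Fin 3) ℝ)
    (hA : ∀ i j, i ≠ j → A i j = a) :
    ∀ i : Fin 3, ∀ U ∈ 𝓝[simplex3] (vertex i), ∃ q ∈ U,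
      ¬ Tendsto (fun n => (VLdyn A)^[n] q) atTop (𝓝 (vertex i)) := by
  intro i U hU
  obtain ⟨x, hxU, hx⟩ := ((tendsto_balancedPoint_nhdsLT_one i).eventually hU).and
    (Ico_mem_nhdsLT (by norm_num : (1 / 3 : ℝ) < 1)) |>.exists
  refine ⟨balancedPoint i x, hxU, fun hT => ?_⟩
  have hx01 : x ∈ Set.Icc (0 : ℝ) 1 := ⟨by linarith [hx.1], hx.2.le⟩
  have horbit (n : ℕ) : ((VLdyn A)^[n] (balancedPoint i x)) i ≤ x := by
    rw [iterate_VLdyn_balancedPoint ha hA i hx01]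
    simpa [balancedPoint] using
      ((mapsTo_balancedDyn ⟨hx.1, hx.2.le⟩).iterate n ⟨hx01.1, le_rfl⟩).2
  have hlim := le_of_tendsto' (((continuous_apply i).tendsto _).comp hT) horbit
  simp only [vertex, if_true] at hlim
  linarith [hx.2]

theorem stmt_12 (a : ℝ) (ha : 0 < a) (A : Matrix (Fin 3) (Fin 3) ℝ)
    (hdiag : ∀ i, A i i = 0) (hA : ∀ i j, i ≠ j → A i j = a) :
    ∀ i : Fin 3, ∀ U ∈ 𝓝[simplex3] (vertex i), ∃ q ∈ U,
      ¬ Tendsto (fun n => (VLdyn A)^[n] q) atTop (𝓝 (vertex i)) :=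
  stmt_12_general a ha A hA
end

section
/- Let A be a proper symmetric 3×3 advantage matrix with a₁₂ = a₂₁ = a, a₁₃ = a₃₁ = b, a₂₃ = a₃₂ = c, where a, b, c > 0, and let F : S₃ → S₃ be the associated Variational Learning dynamics. Then the point p = (c/(a+b+c), b/(a+b+c), a/(a+b+c)) lies in the interior of S₃, is a fixed point of F, and is the unique fixed point of F in the interior of S₃. -/
open Finset Filter Topology

/-!
Writing `c_i` for the penalties and `D` for the denominator of `F`, the product
`F_i(p) c_i = (∏ₖ cₖ) / D` does not depend on `i`; hence `p` is a fixed point exactly when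
`p_i c_i` is the same for every `i` (given `∑ pᵢ = 1` and `cᵢ ≠ 0`). For the symmetric
matrix, `p₀ c₀ = p₁ c₁` reduces to `p₂ (b p₀ - c p₁) = 0`, and `p₀ c₀ = p₂ c₂` to
`p₁ (a p₀ - c p₂) = 0`; in the interior this forces `p ∝ (c, b, a)`.
-/

theorem VLdyn_eq_div_erase (A : Matrix (Fin 3) (Fin 3) ℝ) (p : Fin 3 → ℝ) (i : Fin 3) :
    VLdyn A p i = (∏ j ∈ univ.erase i, penalty A p j) /
      ∑ m, ∏ k ∈ univ.erase m, penalty A p k := by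
  simp only [VLdyn, filter_ne']

theorem VLdyn_mul_penalty (A : Matrix (Fin 3) (Fin 3) ℝ) (p : Fin 3 → ℝ) (i : Fin 3) :
    VLdyn A p i * penalty A p i =
      (∏ k, penalty A p k) / ∑ m, ∏ k ∈ univ.erase m, penalty A p k := by
  rw [VLdyn_eq_div_erase, div_mul_eq_mul_div, prod_erase_mul _ _ (mem_univ i)]

theorem mul_penalty_eq_of_VLdyn_eq_self {A : Matrix (Fin 3) (Fin 3) ℝ} {p : Fin 3 → ℝ}
    (hfix : VLdyn A p = p) (i j : Fin 3) :
    p i * penalty A p i = p j * penalty A p j := by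
  simpa only [hfix] using (VLdyn_mul_penalty A p i).trans (VLdyn_mul_penalty A p j).symm

theorem VLdyn_eq_self_of_mul_penalty_eq {A : Matrix (Fin 3) (Fin 3) ℝ} {p : Fin 3 → ℝ} {K : ℝ}
    (hpen : ∀ i, penalty A p i ≠ 0) (hsum : ∑ i, p i = 1)
    (hK : ∀ i, p i * penalty A p i = K) : VLdyn A p = p := by
  have hK0 : K ≠ 0 := by
    rintro rfl
    have hp : ∀ i, p i = 0 := fun i => (mul_eq_zero.mp (hK i)).resolve_right (hpen i)
    simp [hp] at hsum
  have hP : ∏ k, penalty A p k ≠ 0 := prod_ne_zero_iff.mpr fun k _ => hpen k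
  have hprod : ∀ i, ∏ j ∈ univ.erase i, penalty A p j = (∏ k, penalty A p k) / K * p i := by
    intro i
    have hpi : p i = K / penalty A p i := by rw [← hK i, mul_div_cancel_right₀ _ (hpen i)]
    rw [hpi, ← prod_erase_mul univ (penalty A p) (mem_univ i)]
    field_simp [hpen i]
  funext i
  simp only [VLdyn_eq_div_erase, hprod, ← mul_sum, hsum, mul_one]
  exact mul_div_cancel_left₀ _ (div_ne_zero hP hK0)

theorem penalty_symm (a b c : ℝ) (p : Fin 3 → ℝ) :
    penalty !![0, a, b; a, 0, c; b, c, 0] p =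
      ![a * p 1 + b * p 2, a * p 0 + c * p 2, b * p 0 + c * p 1] := by
  funext i
  fin_cases i <;> simp [penalty, filter_ne', Fin.sum_univ_three, sum_erase_eq_sub]

theorem eq_of_mul_penalty_symm_eq {a b c : ℝ} {q : Fin 3 → ℝ} (hs : a + b + c ≠ 0) (hc : c ≠ 0)
    (hq1 : q 1 ≠ 0) (hq2 : q 2 ≠ 0) (hsum : ∑ i, q i = 1)
    (h01 : q 0 * penalty !![0, a, b; a, 0, c; b, c, 0] q 0 =
      q 1 * penalty !![0, a, b; a, 0, c; b, c, 0] q 1)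
    (h02 : q 0 * penalty !![0, a, b; a, 0, c; b, c, 0] q 0 =
      q 2 * penalty !![0, a, b; a, 0, c; b, c, 0] q 2) :
    q = ![c / (a + b + c), b / (a + b + c), a / (a + b + c)] := by
  simp only [penalty_symm, Matrix.cons_val] at h01 h02
  rw [Fin.sum_univ_three] at hsum
  have r1 : b * q 0 = c * q 1 := mul_left_cancel₀ hq2 (by linear_combination h01)
  have r2 : a * q 0 = c * q 2 := mul_left_cancel₀ hq1 (by linear_combination h02)
  have hq0 : q 0 * (a + b + c) = c := by linear_combination c * hsum + r1 + r2
  have e0 : q 0 = c / (a + b + c) := (eq_div_iff hs).mpr hq0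
  have e1 : q 1 = b / (a + b + c) := (eq_div_iff hs).mpr <|
    mul_left_cancel₀ hc (by linear_combination b * hq0 - (a + b + c) * r1)
  have e2 : q 2 = a / (a + b + c) := (eq_div_iff hs).mpr <|
    mul_left_cancel₀ hc (by linear_combination a * hq0 - (a + b + c) * r2)
  funext i
  fin_cases i <;> simpa

theorem stmt_13 (a b c : ℝ) (ha : 0 < a) (hb : 0 < b) (hc : 0 < c)
    (A : Matrix (Fin 3) (Fin 3) ℝ)
    (hA : A = !![0, a, b; a, 0, c; b, c, 0]) :
    (![c/(a+b+c), b/(a+b+c), a/(a+b+c)] : Fin 3 → ℝ) ∈ simplex3 ∧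
    (∀ i, 0 < (![c/(a+b+c), b/(a+b+c), a/(a+b+c)] : Fin 3 → ℝ) i ∧
      (![c/(a+b+c), b/(a+b+c), a/(a+b+c)] : Fin 3 → ℝ) i < 1) ∧
    VLdyn A ![c/(a+b+c), b/(a+b+c), a/(a+b+c)] = ![c/(a+b+c), b/(a+b+c), a/(a+b+c)] ∧
    (∀ q ∈ simplex3, (∀ i, 0 < q i ∧ q i < 1) → VLdyn A q = q →
      q = ![c/(a+b+c), b/(a+b+c), a/(a+b+c)]) := by
  subst hA
  set p : Fin 3 → ℝ := ![c/(a+b+c), b/(a+b+c), a/(a+b+c)] with hp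
  have hs : 0 < a + b + c := by positivity
  have hsum : ∑ i, p i = 1 := by
    simp only [hp, Fin.sum_univ_three, Matrix.cons_val]
    field_simp
    ring
  refine ⟨⟨fun i => ?_, hsum⟩, fun i => ?_, ?_, ?_⟩
  · fin_cases i <;> simp [hp] <;> positivity
  · fin_cases i <;> simp [hp] <;> exact ⟨by positivity, by rw [div_lt_one hs]; linarith⟩
  · refine VLdyn_eq_self_of_mul_penalty_eq (K := 2 * a * b * c / (a + b + c) ^ 2) ?_ hsum ?_
    · intro i
      fin_cases i <;> simp [hp, penalty_symm] <;> positivity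
    · intro i
      fin_cases i <;> simp [hp, penalty_symm] <;> field_simp <;> ring
  · rintro q ⟨-, hsum⟩ hq hfix
    exact eq_of_mul_penalty_symm_eq hs.ne' hc.ne' (hq 1).1.ne' (hq 2).1.ne' hsum
      (mul_penalty_eq_of_VLdyn_eq_self hfix 0 1) (mul_penalty_eq_of_VLdyn_eq_self hfix 0 2)
end

section
/- Let A be a proper symmetric 3×3 advantage matrix with a₁₂ = a₂₁ = a, a₁₃ = a₃₁ = b, a₂₃ = a₃₂ = c, where a, b, c > 0, and let F : S₃ → S₃ be the associated Variational Learning dynamics. Then none of the vertex fixed points v₁ = (1,0,0), v₂ = (0,1,0), v₃ = (0,0,1) is asymptotically stable: for each vertex v_i and every relative neighbourhood U of v_i in S₃, there exists q ∈ U such that the iterates Fⁿ(q) do not converge to v_i. -/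
open Finset Filter Topology

def vlWeight (A : Matrix (Fin 3) (Fin 3) ℝ) (p : Fin 3 → ℝ) (m : Fin 3) : ℝ :=
  ∏ k ∈ univ.filter (fun k => k ≠ m), penalty A p k

lemma VLdyn_eq_vlWeight_div (A : Matrix (Fin 3) (Fin 3) ℝ) (p : Fin 3 → ℝ) (i : Fin 3) :
    VLdyn A p i = vlWeight A p i / ∑ m, vlWeight A p m :=
  rfl

lemma simplex3_eq_stdSimplex : simplex3 = stdSimplex ℝ (Fin 3) :=
  rfl

lemma vertex_eq_single (i : Fin 3) : vertex i = Pi.single i 1 := by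
  ext j
  simp [vertex, Pi.single_apply]

section Positivity

variable {A : Matrix (Fin 3) (Fin 3) ℝ} {p : Fin 3 → ℝ}

lemma penalty_nonneg (hA : ∀ i j, i ≠ j → 0 ≤ A i j) (hp : ∀ l, 0 ≤ p l) (i : Fin 3) :
    0 ≤ penalty A p i :=
  sum_nonneg fun j hj => mul_nonneg (hA i j (mem_filter.1 hj).2.symm) (hp j)

lemma penalty_pos (hA : ∀ i j, i ≠ j → 0 < A i j) (hp : ∀ l, 0 ≤ p l) {k m : Fin 3}
    (hkm : k ≠ m) (hm : 0 < p m) : 0 < penalty A p k :=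
  calc 0 < A k m * p m := mul_pos (hA k m hkm) hm
    _ ≤ penalty A p k :=
      single_le_sum (f := fun j => A k j * p j)
        (fun j hj => mul_nonneg (hA k j (mem_filter.1 hj).2.symm).le (hp j))
        (mem_filter.2 ⟨mem_univ m, hkm.symm⟩)

lemma vlWeight_nonneg (hA : ∀ i j, i ≠ j → 0 ≤ A i j) (hp : ∀ l, 0 ≤ p l) (m : Fin 3) :
    0 ≤ vlWeight A p m :=
  prod_nonneg fun k _ => penalty_nonneg hA hp k

lemma vlWeight_pos (hA : ∀ i j, i ≠ j → 0 < A i j) (hp : ∀ l, 0 ≤ p l) {m : Fin 3}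
    (hm : 0 < p m) : 0 < vlWeight A p m :=
  prod_pos fun _ hk => penalty_pos hA hp (mem_filter.1 hk).2 hm

lemma exists_pos_of_mem_simplex3 (hp : p ∈ simplex3) : ∃ m, 0 < p m := by
  by_contra! h
  linarith [hp.2, sum_nonpos fun m (_ : m ∈ univ) => h m]

lemma exists_ne_pos_of_mem_simplex3 (hp : p ∈ simplex3) {i : Fin 3} (hpi : p i < 1) :
    ∃ m ≠ i, 0 < p m := by
  by_contra! h
  linarith [hp.2, add_sum_erase univ p (mem_univ i),
    sum_nonpos fun m (hm : m ∈ univ.erase i) => h m (ne_of_mem_erase hm)]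

lemma sum_vlWeight_pos (hA : ∀ i j, i ≠ j → 0 < A i j) (hp : p ∈ simplex3) :
    0 < ∑ m, vlWeight A p m := by
  obtain ⟨m, hm⟩ := exists_pos_of_mem_simplex3 hp
  exact lt_of_lt_of_le (vlWeight_pos hA hp.1 hm)
    (single_le_sum (fun k _ => vlWeight_nonneg (fun i j h => (hA i j h).le) hp.1 k) (mem_univ m))

lemma mapsTo_VLdyn_simplex3 (hA : ∀ i j, i ≠ j → 0 < A i j) :
    Set.MapsTo (VLdyn A) simplex3 simplex3 := by
  intro p hp
  have hD := sum_vlWeight_pos hA hp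
  refine ⟨fun i => div_nonneg (vlWeight_nonneg (fun i j h => (hA i j h).le) hp.1 i) hD.le, ?_⟩
  simp only [VLdyn_eq_vlWeight_div, ← sum_div, div_self hD.ne']

lemma VLdyn_apply_lt_one (hA : ∀ i j, i ≠ j → 0 < A i j) (hp : p ∈ simplex3) {i : Fin 3}
    (hpi : p i < 1) : VLdyn A p i < 1 := by
  obtain ⟨m, hmi, hm⟩ := exists_ne_pos_of_mem_simplex3 hp hpi
  rw [VLdyn_eq_vlWeight_div, div_lt_one (sum_vlWeight_pos hA hp)]
  calc vlWeight A p i < vlWeight A p i + vlWeight A p m :=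
        lt_add_of_pos_right _ (vlWeight_pos hA hp.1 hm)
    _ ≤ ∑ m, vlWeight A p m :=
        add_le_sum (fun k _ => vlWeight_nonneg (fun i j h => (hA i j h).le) hp.1 k)
          (mem_univ i) (mem_univ m) hmi.symm

end Positivity

lemma repulsion_inequality {α β γ x y z : ℝ} (hγ : 0 ≤ γ) (hy : 0 ≤ y) (hz : 0 ≤ z)
    (h : γ * (y + z) ≤ α * x) :
    (y + z) * ((α * x + γ * z) * (β * x + γ * y)) ≤
      x * ((α * y + β * z) * ((α * x + γ * z) + (β * x + γ * y))) := by
  have hsq : γ ^ 2 * (y + z) ^ 2 ≤ α ^ 2 * x ^ 2 := by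
    simpa only [mul_pow] using pow_le_pow_left₀ (by positivity) h 2
  have hcubic : γ ^ 2 * (y + z) * y * z ≤ x ^ 2 * (α ^ 2 * y + β ^ 2 * z) :=
    calc γ ^ 2 * (y + z) * y * z ≤ γ ^ 2 * (y + z) ^ 2 * y := by
          nlinarith [mul_nonneg (mul_nonneg (sq_nonneg γ) (add_nonneg hy hz)) (mul_nonneg hy hy)]
      _ ≤ α ^ 2 * x ^ 2 * y := mul_le_mul_of_nonneg_right hsq hy
      _ ≤ x ^ 2 * (α ^ 2 * y + β ^ 2 * z) := by
          nlinarith [mul_nonneg (mul_nonneg (sq_nonneg x) (sq_nonneg β)) hz]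
  have hdiff : x * ((α * y + β * z) * ((α * x + γ * z) + (β * x + γ * y))) -
      (y + z) * ((α * x + γ * z) * (β * x + γ * y)) =
      x ^ 2 * (α ^ 2 * y + β ^ 2 * z) - γ ^ 2 * (y + z) * y * z := by ring
  linarith

section Coordinates

variable {i j k : Fin 3}

lemma Fin3.univ_eq_triple (hij : i ≠ j) (hik : i ≠ k) (hjk : j ≠ k) :
    (univ : Finset (Fin 3)) = {i, j, k} := by
  revert i j k; decide

lemma Fin3.filter_ne_eq_pair (hij : i ≠ j) (hik : i ≠ k) (hjk : j ≠ k) :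
    univ.filter (fun l => l ≠ i) = {j, k} := by
  revert i j k; decide

lemma Fin3.sum_eq_of_ne {M : Type*} [AddCommMonoid M] (f : Fin 3 → M) (hij : i ≠ j)
    (hik : i ≠ k) (hjk : j ≠ k) : ∑ l, f l = f i + f j + f k := by
  rw [Fin3.univ_eq_triple hij hik hjk, sum_insert (by simp [hij, hik]), sum_pair hjk, add_assoc]

variable {A : Matrix (Fin 3) (Fin 3) ℝ} {p : Fin 3 → ℝ}

lemma penalty_eq_of_ne (hij : i ≠ j) (hik : i ≠ k) (hjk : j ≠ k) :
    penalty A p i = A i j * p j + A i k * p k := by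
  rw [penalty, Fin3.filter_ne_eq_pair hij hik hjk, sum_pair hjk]

lemma vlWeight_eq_of_ne (hij : i ≠ j) (hik : i ≠ k) (hjk : j ≠ k) :
    vlWeight A p i = penalty A p j * penalty A p k := by
  rw [vlWeight, Fin3.filter_ne_eq_pair hij hik hjk, prod_pair hjk]

lemma VLdyn_apply_le_self (hsymm : A.IsSymm) (hA : ∀ i j, i ≠ j → 0 < A i j)
    (hij : i ≠ j) (hik : i ≠ k) (hjk : j ≠ k) (hp : p ∈ simplex3)
    (hnear : A j k * (1 - p i) ≤ A i j * p i) : VLdyn A p i ≤ p i := by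
  have hmass : 1 - p i = p j + p k := by
    linarith [(Fin3.sum_eq_of_ne p hij hik hjk).symm.trans hp.2]
  rw [VLdyn_eq_vlWeight_div, div_le_iff₀ (sum_vlWeight_pos hA hp),
    Fin3.sum_eq_of_ne _ hij hik hjk, vlWeight_eq_of_ne hij hik hjk,
    vlWeight_eq_of_ne hij.symm hjk hik, vlWeight_eq_of_ne hik.symm hjk.symm hij]
  rw [penalty_eq_of_ne hij hik hjk, penalty_eq_of_ne hij.symm hjk hik,
    penalty_eq_of_ne hik.symm hjk.symm hij, hsymm.apply i j, hsymm.apply i k, hsymm.apply j k]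
  have key := repulsion_inequality (β := A i k) (hA j k hjk).le (hp.1 j) (hp.1 k)
    (hmass ▸ hnear)
  rw [← hmass] at key
  linarith

end Coordinates

lemma eventually_VLdyn_apply_le_self {A : Matrix (Fin 3) (Fin 3) ℝ} (hsymm : A.IsSymm)
    (hA : ∀ i j, i ≠ j → 0 < A i j) (i : Fin 3) :
    ∀ᶠ p in 𝓝[simplex3] (vertex i), VLdyn A p i ≤ p i := by
  obtain ⟨j, k, hij, hik, hjk⟩ : ∃ j k : Fin 3, i ≠ j ∧ i ≠ k ∧ j ≠ k := by
    revert i; decide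
  have hpi : Tendsto (fun p : Fin 3 → ℝ => p i) (𝓝 (vertex i)) (𝓝 1) := by
    simpa [vertex] using (continuous_apply i).tendsto (vertex i)
  have hnear : ∀ᶠ p in 𝓝 (vertex i), A j k * (1 - p i) < A i j * p i :=
    (tendsto_const_nhds.mul (tendsto_const_nhds.sub hpi)).eventually_lt
      (tendsto_const_nhds.mul hpi) (by simpa using hA i j hij)
  filter_upwards [self_mem_nhdsWithin, nhdsWithin_le_nhds hnear] with p hp hp'
  exact VLdyn_apply_le_self hsymm hA hij hik hjk hp hp'.le

lemma not_tendsto_of_lt_of_eventually_succ_le {α : Type*} [LinearOrder α] [TopologicalSpace α]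
    [OrderClosedTopology α] {u : ℕ → α} {L : α} (hlt : ∀ n, u n < L)
    (hsucc : ∀ᶠ n in atTop, u (n + 1) ≤ u n) : ¬ Tendsto u atTop (𝓝 L) := by
  intro hu
  obtain ⟨N, hN⟩ := eventually_atTop.1 hsucc
  have hanti : Antitone fun n => u (n + N) :=
    antitone_nat_of_succ_le fun n => by simpa only [add_right_comm] using hN (n + N) (by omega)
  exact (hlt N).not_ge (by simpa using hanti.le_of_tendsto ((tendsto_add_atTop_iff_nat N).2 hu) 0)

lemma exists_mem_simplex3_apply_lt_one (i : Fin 3) {U : Set (Fin 3 → ℝ)}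
    (hU : U ∈ 𝓝[simplex3] (vertex i)) : ∃ q ∈ U, q ∈ simplex3 ∧ q i < 1 := by
  obtain ⟨j, hji⟩ := exists_ne i
  set seg := AffineMap.lineMap (k := ℝ) (vertex i) (vertex j)
  have hseg : ∀ t ∈ Set.Icc (0 : ℝ) 1, seg t ∈ simplex3 := fun t ht => by
    rw [simplex3_eq_stdSimplex]
    exact (convex_stdSimplex ℝ (Fin 3)).lineMap_mem
      (vertex_eq_single i ▸ single_mem_stdSimplex ℝ i)
      (vertex_eq_single j ▸ single_mem_stdSimplex ℝ j) ht
  have hsegi : ∀ t, seg t i = 1 - t := fun t => by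
    simp [seg, AffineMap.lineMap_apply_module, vertex, hji.symm]
  have hlim : Tendsto seg (𝓝[Set.Ioo 0 1] 0) (𝓝[simplex3] (vertex i)) :=
    tendsto_nhdsWithin_iff.2
      ⟨(AffineMap.lineMap_continuous.tendsto' 0 _ (by simp)).mono_left nhdsWithin_le_nhds,
        eventually_nhdsWithin_of_forall fun t ht => hseg t (Set.Ioo_subset_Icc_self ht)⟩
  have := left_nhdsWithin_Ioo_neBot (zero_lt_one' ℝ)
  obtain ⟨t, htU, ht⟩ := ((hlim.eventually hU).and self_mem_nhdsWithin).exists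
  exact ⟨seg t, htU, hseg t (Set.Ioo_subset_Icc_self ht), by rw [hsegi]; linarith [ht.1]⟩

theorem VLdyn_not_tendsto_vertex {A : Matrix (Fin 3) (Fin 3) ℝ} (hsymm : A.IsSymm)
    (hA : ∀ i j, i ≠ j → 0 < A i j) (i : Fin 3) :
    ∀ U ∈ 𝓝[simplex3] (vertex i), ∃ q ∈ U,
      ¬ Tendsto (fun n => (VLdyn A)^[n] q) atTop (𝓝 (vertex i)) := by
  intro U hU
  obtain ⟨q, hqU, hq, hqi⟩ := exists_mem_simplex3_apply_lt_one i hU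
  refine ⟨q, hqU, fun hconv => ?_⟩
  have horbit : ∀ n, (VLdyn A)^[n] q ∈ simplex3 :=
    fun n => (mapsTo_VLdyn_simplex3 hA).iterate n hq
  have hlt : ∀ n, (VLdyn A)^[n] q i < 1 := by
    intro n
    induction n with
    | zero => exact hqi
    | succ n ih => rw [Function.iterate_succ_apply']; exact VLdyn_apply_lt_one hA (horbit n) ih
  have hconv' : Tendsto (fun n => (VLdyn A)^[n] q) atTop (𝓝[simplex3] (vertex i)) :=
    tendsto_nhdsWithin_iff.2 ⟨hconv, .of_forall horbit⟩
  refine not_tendsto_of_lt_of_eventually_succ_le hlt ?_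
    (by simpa [vertex] using tendsto_pi_nhds.1 hconv i)
  filter_upwards [hconv'.eventually (eventually_VLdyn_apply_le_self hsymm hA i)] with n hn
  rwa [Function.iterate_succ_apply']

theorem stmt_15 (a b c : ℝ) (ha : 0 < a) (hb : 0 < b) (hc : 0 < c)
    (A : Matrix (Fin 3) (Fin 3) ℝ)
    (hA : A = !![0, a, b; a, 0, c; b, c, 0]) :
    ∀ i : Fin 3, ∀ U ∈ 𝓝[simplex3] (vertex i), ∃ q ∈ U,
      ¬ Tendsto (fun n => (VLdyn A)^[n] q) atTop (𝓝 (vertex i)) := by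
  subst hA
  refine VLdyn_not_tendsto_vertex ?_ ?_
  · exact Matrix.IsSymm.ext fun i j => by fin_cases i <;> fin_cases j <;> rfl
  · intro i j hij
    fin_cases i <;> fin_cases j <;> simp_all
end

section
/- Let A be a canonical quasi-Babelian 3×3 advantage matrix with parameters a, b > 0 (a₂₁ = a₃₁ = b and all other off-diagonal entries equal to a), let ρ = b/a, and let F : S₃ → S₃ be the associated Variational Learning dynamics. If 0 < ρ < 2, then the point p* = (1/(5−2ρ), (2−ρ)/(5−2ρ), (2−ρ)/(5−2ρ)) lies in the interior of S₃, is a fixed point of F, and is the unique fixed point of F in the interior of S₃. If ρ ≥ 2, then F has no fixed point in the interior of S₃; in particular, at ρ = 2 the formula for p* yields the vertex v₁ = (1,0,0). -/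
open Finset Filter Topology

lemma pen0 (a b : ℝ) (p : Fin 3 → ℝ) :
    penalty !![0,a,a;b,0,a;b,a,0] p 0 = a * p 1 + a * p 2 := by
  simp [penalty, Finset.sum_filter, Fin.sum_univ_three]
lemma pen1 (a b : ℝ) (p : Fin 3 → ℝ) :
    penalty !![0,a,a;b,0,a;b,a,0] p 1 = b * p 0 + a * p 2 := by
  simp [penalty, Finset.sum_filter, Fin.sum_univ_three]
lemma pen2 (a b : ℝ) (p : Fin 3 → ℝ) :
    penalty !![0,a,a;b,0,a;b,a,0] p 2 = b * p 0 + a * p 1 := by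
  simp [penalty, Finset.sum_filter, Fin.sum_univ_three]

lemma VL_unfold (A : Matrix (Fin 3) (Fin 3) ℝ) (p : Fin 3 → ℝ) (i : Fin 3) :
    VLdyn A p i = (∏ j ∈ Finset.univ.filter (fun j => j ≠ i), penalty A p j) /
      (penalty A p 1 * penalty A p 2 + penalty A p 0 * penalty A p 2 +
        penalty A p 0 * penalty A p 1) := by
  simp [VLdyn, Finset.prod_filter, Fin.sum_univ_three, Fin.prod_univ_three]

lemma VL0 (A : Matrix (Fin 3) (Fin 3) ℝ) (p : Fin 3 → ℝ) :
    VLdyn A p 0 = (penalty A p 1 * penalty A p 2) /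
      (penalty A p 1 * penalty A p 2 + penalty A p 0 * penalty A p 2 +
        penalty A p 0 * penalty A p 1) := by
  rw [VL_unfold]; congr 1; simp [Finset.prod_filter, Fin.prod_univ_three]
lemma VL1 (A : Matrix (Fin 3) (Fin 3) ℝ) (p : Fin 3 → ℝ) :
    VLdyn A p 1 = (penalty A p 0 * penalty A p 2) /
      (penalty A p 1 * penalty A p 2 + penalty A p 0 * penalty A p 2 +
        penalty A p 0 * penalty A p 1) := by
  rw [VL_unfold]; congr 1; simp [Finset.prod_filter, Fin.prod_univ_three]
lemma VL2 (A : Matrix (Fin 3) (Fin 3) ℝ) (p : Fin 3 → ℝ) :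
    VLdyn A p 2 = (penalty A p 0 * penalty A p 1) /
      (penalty A p 1 * penalty A p 2 + penalty A p 0 * penalty A p 2 +
        penalty A p 0 * penalty A p 1) := by
  rw [VL_unfold]; congr 1; simp [Finset.prod_filter, Fin.prod_univ_three]

/-- If penalties are positive, sum is 1, and the balance equations hold, p is fixed. -/
lemma fixed_of (A : Matrix (Fin 3) (Fin 3) ℝ) (q : Fin 3 → ℝ)
    (hsum : q 0 + q 1 + q 2 = 1)
    (h0 : 0 < penalty A q 0) (h1 : 0 < penalty A q 1) (h2 : 0 < penalty A q 2)
    (e01 : q 0 * penalty A q 0 = q 1 * penalty A q 1)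
    (e02 : q 0 * penalty A q 0 = q 2 * penalty A q 2) :
    VLdyn A q = q := by
  set c0 := penalty A q 0
  set c1 := penalty A q 1
  set c2 := penalty A q 2
  have hS : (0:ℝ) < c1 * c2 + c0 * c2 + c0 * c1 := by positivity
  funext i
  fin_cases i
  · show VLdyn A q 0 = q 0
    rw [VL0, div_eq_iff hS.ne']
    linear_combination (-c2) * e01 + (-c1) * e02 + (-(c1*c2)) * hsum
  · show VLdyn A q 1 = q 1
    rw [VL1, div_eq_iff hS.ne']
    linear_combination (c2 + c0) * e01 + (-c0) * e02 + (-(c0*c2)) * hsum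
  · show VLdyn A q 2 = q 2
    rw [VL2, div_eq_iff hS.ne']
    linear_combination (-c0) * e01 + (c1 + c0) * e02 + (-(c0*c1)) * hsum

/-- Interior fixed points satisfy the balance conclusions. -/
lemma balance (a ρ : ℝ) (ha : 0 < a) (hρ : 0 < ρ) (q : Fin 3 → ℝ)
    (hpos : ∀ i, 0 < q i) (hsum : q 0 + q 1 + q 2 = 1)
    (hfix : VLdyn !![0,a,a;ρ*a,0,a;ρ*a,a,0] q = q) :
    q 1 = q 2 ∧ (2 - ρ) * a * q 0 = a * q 1 := by
  set A := !![0,a,a;ρ*a,0,a;ρ*a,a,0] with hA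
  have hc0 : penalty A q 0 = a * q 1 + a * q 2 := pen0 a (ρ*a) q
  have hc1 : penalty A q 1 = ρ*a * q 0 + a * q 2 := pen1 a (ρ*a) q
  have hc2 : penalty A q 2 = ρ*a * q 0 + a * q 1 := pen2 a (ρ*a) q
  set c0 := penalty A q 0
  set c1 := penalty A q 1
  set c2 := penalty A q 2
  have hc0p : 0 < c0 := by rw [hc0]; have := hpos 1; have := hpos 2; positivity
  have hc1p : 0 < c1 := by rw [hc1]; have := hpos 0; have := hpos 2; positivity
  have hc2p : 0 < c2 := by rw [hc2]; have := hpos 0; have := hpos 1; positivity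
  have hS : (0:ℝ) < c1 * c2 + c0 * c2 + c0 * c1 := by positivity
  have e0 : c1 * c2 = q 0 * (c1 * c2 + c0 * c2 + c0 * c1) := by
    have := congrFun hfix 0; rw [VL0, div_eq_iff hS.ne'] at this; exact this
  have e1 : c0 * c2 = q 1 * (c1 * c2 + c0 * c2 + c0 * c1) := by
    have := congrFun hfix 1; rw [VL1, div_eq_iff hS.ne'] at this; exact this
  have e2 : c0 * c1 = q 2 * (c1 * c2 + c0 * c2 + c0 * c1) := by
    have := congrFun hfix 2; rw [VL2, div_eq_iff hS.ne'] at this; exact this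
  have hql12 : q 1 * c1 = q 2 * c2 := by
    apply mul_right_cancel₀ hS.ne'
    linear_combination c2 * e2 - c1 * e1
  have hql01 : q 0 * c0 = q 1 * c1 := by
    apply mul_right_cancel₀ hS.ne'
    linear_combination c1 * e1 - c0 * e0
  have hq12 : q 1 = q 2 := by
    have hz : ρ * a * q 0 * (q 1 - q 2) = 0 := by
      rw [hc1, hc2] at hql12; linear_combination hql12
    have hne : ρ * a * q 0 ≠ 0 := by
      have := hpos 0; positivity
    have := (mul_eq_zero.mp hz).resolve_left hne
    linarith
  refine ⟨hq12, ?_⟩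
  have hz : ((2 - ρ) * a * q 0 - a * q 1) * q 1 = 0 := by
    rw [hc0, hc1] at hql01
    linear_combination hql01 + (a * q 0 - a * q 1) * hq12
  have := (mul_eq_zero.mp hz).resolve_right (hpos 1).ne'
  linarith

theorem stmt_16 (a b : ℝ) (ha : 0 < a) (hb : 0 < b)
    (A : Matrix (Fin 3) (Fin 3) ℝ)
    (hA : A = !![0, a, a; b, 0, a; b, a, 0]) (ρ : ℝ) (hρ : ρ = b / a) :
    (ρ < 2 →
      ((![1/(5-2*ρ), (2-ρ)/(5-2*ρ), (2-ρ)/(5-2*ρ)] : Fin 3 → ℝ) ∈ simplex3 ∧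
       (∀ i, 0 < (![1/(5-2*ρ), (2-ρ)/(5-2*ρ), (2-ρ)/(5-2*ρ)] : Fin 3 → ℝ) i ∧
         (![1/(5-2*ρ), (2-ρ)/(5-2*ρ), (2-ρ)/(5-2*ρ)] : Fin 3 → ℝ) i < 1) ∧
       VLdyn A ![1/(5-2*ρ), (2-ρ)/(5-2*ρ), (2-ρ)/(5-2*ρ)] =
         ![1/(5-2*ρ), (2-ρ)/(5-2*ρ), (2-ρ)/(5-2*ρ)] ∧
       (∀ q ∈ simplex3, (∀ i, 0 < q i ∧ q i < 1) → VLdyn A q = q →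
         q = ![1/(5-2*ρ), (2-ρ)/(5-2*ρ), (2-ρ)/(5-2*ρ)]))) ∧
    (2 ≤ ρ → ∀ q ∈ simplex3, (∀ i, 0 < q i ∧ q i < 1) → VLdyn A q ≠ q) ∧
    (ρ = 2 →
      (![1/(5-2*ρ), (2-ρ)/(5-2*ρ), (2-ρ)/(5-2*ρ)] : Fin 3 → ℝ) = vertex 0) := by
  have hb' : b = ρ * a := by rw [hρ]; field_simp
  subst hb'
  subst hA
  have hρ0 : 0 < ρ := by nlinarith
  refine ⟨?_, ?_, ?_⟩
  · -- case ρ < 2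
    intro hρ2
    have hd : (0:ℝ) < 5 - 2*ρ := by linarith
    have h2ρ : (0:ℝ) < 2 - ρ := by linarith
    have hs : (0:ℝ) < 1/(5-2*ρ) := by positivity
    have ht : (0:ℝ) < (2-ρ)/(5-2*ρ) := div_pos h2ρ hd
    set P : Fin 3 → ℝ := ![1/(5-2*ρ), (2-ρ)/(5-2*ρ), (2-ρ)/(5-2*ρ)] with hP
    have hP0 : P 0 = 1/(5-2*ρ) := rfl
    have hP1 : P 1 = (2-ρ)/(5-2*ρ) := rfl
    have hP2 : P 2 = (2-ρ)/(5-2*ρ) := rfl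
    have hsum : P 0 + P 1 + P 2 = 1 := by
      rw [hP0, hP1, hP2]; field_simp; ring
    refine ⟨⟨?_, ?_⟩, ?_, ?_, ?_⟩
    · intro i; fin_cases i
      · exact hs.le
      · exact ht.le
      · exact ht.le
    · rw [Fin.sum_univ_three]; exact hsum
    · intro i; fin_cases i
      · exact ⟨hs, (div_lt_one hd).2 (by linarith)⟩
      · exact ⟨ht, (div_lt_one hd).2 (by linarith)⟩
      · exact ⟨ht, (div_lt_one hd).2 (by linarith)⟩
    · -- fixed point
      apply fixed_of _ _ hsum
      · rw [pen0, hP1, hP2]; positivity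
      · rw [pen1, hP0, hP2]; positivity
      · rw [pen2, hP0, hP1]; positivity
      · rw [pen0, pen1, hP0, hP1, hP2]; field_simp; ring
      · rw [pen0, pen2, hP0, hP1, hP2]; field_simp; ring
    · -- uniqueness
      intro q hq hint hfix
      have hsumq : q 0 + q 1 + q 2 = 1 := by
        have := hq.2; rwa [Fin.sum_univ_three] at this
      obtain ⟨h12, hbal⟩ := balance a ρ ha hρ0 q (fun i => (hint i).1) hsumq hfix
      have hq0 : (5 - 2*ρ) * (a * q 0) = a := by
        linear_combination 2*hbal + a*hsumq + a*h12
      have hq0'' : q 0 * (5-2*ρ) = 1 :=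
        mul_left_cancel₀ ha.ne' (by linear_combination hq0)
      have hq0' : q 0 = 1/(5-2*ρ) := by
        rw [eq_div_iff hd.ne']; exact hq0''
      have hq1'' : q 1 * (5-2*ρ) = 2-ρ :=
        mul_left_cancel₀ ha.ne' (by linear_combination (2-ρ)*hq0 - (5-2*ρ)*hbal)
      have hq1' : q 1 = (2-ρ)/(5-2*ρ) := by
        rw [eq_div_iff hd.ne']; exact hq1''
      funext i; fin_cases i
      · exact hq0'
      · exact hq1'
      · show q 2 = P 2
        rw [← h12]; exact hq1'
  · -- case 2 ≤ ρ
    intro hρ2 q hq hint hfix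
    have hsumq : q 0 + q 1 + q 2 = 1 := by
      have := hq.2; rwa [Fin.sum_univ_three] at this
    obtain ⟨h12, hbal⟩ := balance a ρ ha hρ0 q (fun i => (hint i).1) hsumq hfix
    nlinarith [(hint 0).1, (hint 1).1, mul_pos ha (hint 1).1, mul_pos ha (hint 0).1]
  · -- ρ = 2
    intro h2
    subst h2
    funext i; fin_cases i <;> norm_num [vertex, Fin.ext_iff]
end

section
/- Let A be a canonical quasi-Babelian 3×3 advantage matrix with parameters a, b > 0 (a₂₁ = a₃₁ = b and all other off-diagonal entries equal to a), let ρ = b/a, and suppose 0 < ρ < 2. Then the interior fixed point p* = (1/(5−2ρ), (2−ρ)/(5−2ρ), (2−ρ)/(5−2ρ)) of the associated Variational Learning dynamics F is asymptotically stable: there exists a relative neighbourhood U of p* in S₃ such that for every q ∈ U the iterates Fⁿ(q) converge to p* as n → ∞. -/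
open Finset Filter Topology

/-!
`VLdyn` is unchanged when the advantage matrix is scaled, so we may take `a = 1`, `b = ρ`, where
the dynamics is the explicit rational map `QuasiBabelian.dyn ρ`. On vectors with coordinate sum
`0` (the directions of the simplex) its derivative at the fixed point is
`v ↦ (ρ v₀ / 2, (v₁ + (ρ - 1) v₂) / 2, (v₂ + (ρ - 1) v₁) / 2)`, of sup-norm at most
`(1 + |ρ - 1|) / 2`, which is `< 1` exactly when `0 < ρ < 2`. So near the fixed point the map
shrinks the distance to it by a fixed factor `< 1` and keeps the simplex invariant, and the
iterates converge geometrically.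
-/

theorem HasFDerivAt.eventually_norm_sub_le {𝕜 E F : Type*} [NontriviallyNormedField 𝕜]
    [NormedAddCommGroup E] [NormedSpace 𝕜 E] [NormedAddCommGroup F] [NormedSpace 𝕜 F]
    {f : E → F} {f' : E →L[𝕜] F} {x₀ : E} {s : Set E} {K k : ℝ} (hf : HasFDerivAt f f' x₀)
    (hf' : ∀ x ∈ s, ‖f' (x - x₀)‖ ≤ K * ‖x - x₀‖) (hK : K < k) :
    ∀ᶠ x in 𝓝[s] x₀, ‖f x - f x₀‖ ≤ k * ‖x - x₀‖ := by
  filter_upwards [nhdsWithin_le_nhds (hf.isLittleO.def (sub_pos.2 hK)), self_mem_nhdsWithin]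
    with x hrem hx
  calc ‖f x - f x₀‖ ≤ ‖f' (x - x₀)‖ + ‖f x - f x₀ - f' (x - x₀)‖ :=
        norm_le_norm_add_norm_sub' _ _
    _ ≤ K * ‖x - x₀‖ + (k - K) * ‖x - x₀‖ := add_le_add (hf' x hx) hrem
    _ = k * ‖x - x₀‖ := by ring

theorem exists_mem_nhdsWithin_tendsto_iterate {X : Type*} [PseudoMetricSpace X] {f : X → X}
    {s : Set X} {x₀ : X} {k : ℝ} (hk₀ : 0 ≤ k) (hk : k < 1)
    (h : ∀ᶠ x in 𝓝[s] x₀, f x ∈ s ∧ dist (f x) x₀ ≤ k * dist x x₀) :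
    ∃ U ∈ 𝓝[s] x₀, ∀ q ∈ U, Tendsto (fun n => f^[n] q) atTop (𝓝 x₀) := by
  obtain ⟨r, hr, hball⟩ := Metric.mem_nhdsWithin_iff.1 h
  refine ⟨Metric.ball x₀ r ∩ s, Metric.mem_nhdsWithin_iff.2 ⟨r, hr, subset_rfl⟩, fun q hq => ?_⟩
  have hiter (n : ℕ) :
      f^[n] q ∈ Metric.ball x₀ r ∩ s ∧ dist (f^[n] q) x₀ ≤ k ^ n * dist q x₀ := by
    induction n with
    | zero => simpa using hq
    | succ n ih =>
      obtain ⟨hn_mem, hn_dist⟩ := ih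
      obtain ⟨hs, hcontr⟩ := hball hn_mem
      rw [Function.iterate_succ_apply']
      refine ⟨⟨?_, hs⟩, ?_⟩
      · calc dist (f (f^[n] q)) x₀ ≤ k * dist (f^[n] q) x₀ := hcontr
          _ ≤ dist (f^[n] q) x₀ := mul_le_of_le_one_left dist_nonneg hk.le
          _ < r := hn_mem.1
      · calc dist (f (f^[n] q)) x₀ ≤ k * dist (f^[n] q) x₀ := hcontr
          _ ≤ k * (k ^ n * dist q x₀) := by gcongr
          _ = k ^ (n + 1) * dist q x₀ := by ring
  rw [tendsto_iff_dist_tendsto_zero]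
  refine squeeze_zero (fun n => dist_nonneg) (fun n => (hiter n).2) ?_
  simpa using (tendsto_pow_atTop_nhds_zero_of_lt_one hk₀ hk).mul_const (dist q x₀)

theorem VLdyn_smul (A : Matrix (Fin 3) (Fin 3) ℝ) {c : ℝ} (hc : c ≠ 0) :
    VLdyn (c • A) = VLdyn A := by
  have hpen : ∀ p j, penalty (c • A) p j = c * penalty A p j := fun p j => by
    simp only [penalty, Matrix.smul_apply, smul_eq_mul, Finset.mul_sum, mul_assoc]
  have hprod : ∀ p i, ∏ j ∈ univ.filter (fun j => j ≠ i), penalty (c • A) p j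
      = c ^ 2 * ∏ j ∈ univ.filter (fun j => j ≠ i), penalty A p j := fun p i => by
    simp only [hpen, Finset.prod_mul_distrib, Finset.prod_const, Finset.filter_ne',
      Finset.card_erase_of_mem (Finset.mem_univ _), Finset.card_univ, Fintype.card_fin]
  funext p i
  simp only [VLdyn, hprod, ← Finset.mul_sum]
  exact mul_div_mul_left _ _ (pow_ne_zero 2 hc)

namespace QuasiBabelian

def matrix (ρ : ℝ) : Matrix (Fin 3) (Fin 3) ℝ := !![0, 1, 1; ρ, 0, 1; ρ, 1, 0]

def den (ρ : ℝ) (p : Fin 3 → ℝ) : ℝ :=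
  (ρ * p 0 + p 2) * (ρ * p 0 + p 1) + (p 1 + p 2) * (ρ * p 0 + p 1)
    + (p 1 + p 2) * (ρ * p 0 + p 2)

noncomputable def dyn (ρ : ℝ) (p : Fin 3 → ℝ) : Fin 3 → ℝ :=
  ![(ρ * p 0 + p 2) * (ρ * p 0 + p 1) / den ρ p,
    (p 1 + p 2) * (ρ * p 0 + p 1) / den ρ p,
    (p 1 + p 2) * (ρ * p 0 + p 2) / den ρ p]

noncomputable def fixedPoint (ρ : ℝ) : Fin 3 → ℝ :=
  ![1 / (5 - 2 * ρ), (2 - ρ) / (5 - 2 * ρ), (2 - ρ) / (5 - 2 * ρ)]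

noncomputable def linearization (ρ : ℝ) (v : Fin 3 → ℝ) : Fin 3 → ℝ :=
  ![ρ / 2 * v 0, (v 1 + (ρ - 1) * v 2) / 2, (v 2 + (ρ - 1) * v 1) / 2]

theorem smul_matrix {a b : ℝ} (ha : a ≠ 0) :
    a • matrix (b / a) = !![0, a, a; b, 0, a; b, a, 0] := by
  ext i j
  fin_cases i <;> fin_cases j <;> simp [matrix, mul_div_cancel₀ b ha]

theorem VLdyn_matrix (ρ : ℝ) : VLdyn (matrix ρ) = dyn ρ := by
  funext p i
  fin_cases i <;>
    simp [VLdyn, penalty, matrix, dyn, den, Finset.prod_filter, Finset.sum_filter,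
      Fin.sum_univ_three, Fin.prod_univ_three]

theorem den_pos {ρ : ℝ} (hρ : 0 < ρ) {p : Fin 3 → ℝ} (hp : p ∈ simplex3) : 0 < den ρ p := by
  obtain ⟨hnn, hsum⟩ := hp
  simp only [Fin.sum_univ_three] at hsum
  have h0 := hnn 0; have h1 := hnn 1; have h2 := hnn 2
  unfold den
  rcases h0.eq_or_lt with h | h
  · rw [← h] at hsum ⊢
    nlinarith [mul_nonneg h1 h2]
  · nlinarith [mul_pos (mul_pos hρ h) (mul_pos hρ h), mul_nonneg h1 h2, mul_nonneg h0 h1,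
      mul_nonneg h0 h2]

theorem dyn_mem_simplex3 {ρ : ℝ} (hρ : 0 < ρ) {p : Fin 3 → ℝ} (hp : p ∈ simplex3) :
    dyn ρ p ∈ simplex3 := by
  have hden := den_pos hρ hp
  obtain ⟨hnn, -⟩ := hp
  have h0 := hnn 0; have h1 := hnn 1; have h2 := hnn 2
  refine ⟨fun i => ?_, ?_⟩
  · fin_cases i <;>
      simp only [dyn, Fin.zero_eta, Fin.mk_one, Fin.reduceFinMk, Matrix.cons_val_zero,
        Matrix.cons_val_one, Matrix.cons_val] <;>
      positivity
  · simp only [dyn, Fin.sum_univ_three, Matrix.cons_val_zero, Matrix.cons_val_one,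
      Matrix.cons_val]
    field_simp
    unfold den
    ring

theorem sum_fixedPoint {ρ : ℝ} (hρ : 2 * ρ ≠ 5) : ∑ i, fixedPoint ρ i = 1 := by
  have : 5 - 2 * ρ ≠ 0 := sub_ne_zero.2 (Ne.symm hρ)
  simp only [fixedPoint, Fin.sum_univ_three, Matrix.cons_val_zero, Matrix.cons_val_one,
    Matrix.cons_val]
  field_simp
  ring

theorem den_fixedPoint {ρ : ℝ} (hρ : 2 * ρ ≠ 5) : den ρ (fixedPoint ρ) = 4 / (5 - 2 * ρ) := by
  have : 5 - 2 * ρ ≠ 0 := sub_ne_zero.2 (Ne.symm hρ)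
  simp only [den, fixedPoint, Matrix.cons_val_zero, Matrix.cons_val_one, Matrix.cons_val]
  grind

theorem dyn_fixedPoint {ρ : ℝ} (hρ : 2 * ρ ≠ 5) : dyn ρ (fixedPoint ρ) = fixedPoint ρ := by
  have : 5 - 2 * ρ ≠ 0 := sub_ne_zero.2 (Ne.symm hρ)
  funext i
  fin_cases i <;>
  · simp only [dyn, den_fixedPoint hρ]
    simp only [fixedPoint, Fin.zero_eta, Fin.mk_one, Fin.reduceFinMk,
      Matrix.cons_val_zero, Matrix.cons_val_one, Matrix.cons_val]
    field_simp
    ring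

theorem exists_hasFDerivAt_dyn_apply {ρ : ℝ} (hρ : 2 * ρ ≠ 5) (i : Fin 3) :
    ∃ L : (Fin 3 → ℝ) →L[ℝ] ℝ, HasFDerivAt (fun p => dyn ρ p i) L (fixedPoint ρ) ∧
      ∀ v, ∑ j, v j = 0 → L v = linearization ρ v i := by
  have hd : 5 - 2 * ρ ≠ 0 := sub_ne_zero.2 (Ne.symm hρ)
  have coord (j : Fin 3) := hasFDerivAt_apply (𝕜 := ℝ) j (fixedPoint ρ)
  have c0 := (coord 1).add (coord 2)
  have c1 := ((coord 0).const_mul ρ).add (coord 2)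
  have c2 := ((coord 0).const_mul ρ).add (coord 1)
  have hden : den ρ (fixedPoint ρ) ≠ 0 := by
    rw [den_fixedPoint hρ]; exact div_ne_zero four_ne_zero hd
  have hinv := (hasDerivAt_inv hden).comp_hasFDerivAt (fixedPoint ρ)
    (((c1.mul c2).add (c0.mul c2)).add (c0.mul c1))
  fin_cases i <;> [refine ⟨_, (c1.mul c2).mul hinv, ?_⟩; refine ⟨_, (c0.mul c2).mul hinv, ?_⟩;
    refine ⟨_, (c0.mul c1).mul hinv, ?_⟩] <;>
  · intro v hv
    have hv0 : v 0 = -v 1 - v 2 := by rw [Fin.sum_univ_three] at hv; linarith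
    simp only [den_fixedPoint hρ]
    simp only [fixedPoint, linearization, hv0, Fin.zero_eta, Fin.mk_one,
      Fin.reduceFinMk, Matrix.cons_val_zero, Matrix.cons_val_one, Matrix.cons_val, Pi.mul_apply,
      Pi.add_apply, add_apply, smul_apply, ContinuousLinearMap.proj_apply, smul_eq_mul]
    grind

theorem exists_hasFDerivAt_dyn {ρ : ℝ} (hρ : 2 * ρ ≠ 5) :
    ∃ L : (Fin 3 → ℝ) →L[ℝ] (Fin 3 → ℝ), HasFDerivAt (dyn ρ) L (fixedPoint ρ) ∧
      ∀ v, ∑ j, v j = 0 → L v = linearization ρ v := by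
  choose L hL hLv using exists_hasFDerivAt_dyn_apply hρ
  exact ⟨ContinuousLinearMap.pi L, hasFDerivAt_pi.2 hL, fun v hv => funext fun i => hLv i v hv⟩

theorem norm_linearization_le (ρ : ℝ) (v : Fin 3 → ℝ) :
    ‖linearization ρ v‖ ≤ (1 + |ρ - 1|) / 2 * ‖v‖ := by
  have hv (i : Fin 3) : |v i| ≤ ‖v‖ := norm_le_pi_norm v i
  have hmix (j k : Fin 3) : |v j + (ρ - 1) * v k| ≤ (1 + |ρ - 1|) * ‖v‖ :=
    calc |v j + (ρ - 1) * v k| ≤ |v j| + |ρ - 1| * |v k| := by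
          simpa only [abs_mul] using abs_add_le (v j) ((ρ - 1) * v k)
      _ ≤ ‖v‖ + |ρ - 1| * ‖v‖ := by gcongr <;> exact hv _
      _ = (1 + |ρ - 1|) * ‖v‖ := by ring
  refine (pi_norm_le_iff_of_nonneg (by positivity)).2 fun i => ?_
  rw [Real.norm_eq_abs]
  fin_cases i <;>
    simp only [linearization, Fin.zero_eta, Fin.mk_one, Fin.reduceFinMk, Matrix.cons_val,
      abs_mul, abs_div, abs_two]
  · gcongr
    · simpa using abs_add_le 1 (ρ - 1)
    · exact hv 0
  · linarith [hmix 1 2]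
  · linarith [hmix 2 1]

theorem eventually_mem_simplex3_and_dist_dyn_le {ρ : ℝ} (hρ₀ : 0 < ρ) (hρ₂ : ρ < 2) :
    ∀ᶠ p in 𝓝[simplex3] fixedPoint ρ, dyn ρ p ∈ simplex3 ∧
      dist (dyn ρ p) (fixedPoint ρ) ≤ (3 + |ρ - 1|) / 4 * dist p (fixedPoint ρ) := by
  have hρ₅ : 2 * ρ ≠ 5 := (by linarith : 2 * ρ < 5).ne
  have hρ₁ : |ρ - 1| < 1 := abs_sub_lt_iff.2 ⟨by linarith, by linarith⟩
  obtain ⟨L, hL, hLv⟩ := exists_hasFDerivAt_dyn hρ₅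
  have htangent : ∀ p ∈ simplex3,
      ‖L (p - fixedPoint ρ)‖ ≤ (1 + |ρ - 1|) / 2 * ‖p - fixedPoint ρ‖ := by
    intro p hp
    rw [hLv _ (by simp [Finset.sum_sub_distrib, hp.2, sum_fixedPoint hρ₅])]
    exact norm_linearization_le ρ _
  filter_upwards [self_mem_nhdsWithin,
    hL.eventually_norm_sub_le (k := (3 + |ρ - 1|) / 4) htangent (by linarith)] with p hp hcontr
  rw [dyn_fixedPoint hρ₅] at hcontr
  exact ⟨dyn_mem_simplex3 hρ₀ hp, by simpa only [dist_eq_norm] using hcontr⟩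

end QuasiBabelian

theorem stmt_19 (a b : ℝ) (ha : 0 < a) (hb : 0 < b)
    (A : Matrix (Fin 3) (Fin 3) ℝ)
    (hA : A = !![0, a, a; b, 0, a; b, a, 0]) (ρ : ℝ) (hρ : ρ = b / a)
    (hρ2 : ρ < 2) :
    ∃ U ∈ 𝓝[simplex3] (![1/(5-2*ρ), (2-ρ)/(5-2*ρ), (2-ρ)/(5-2*ρ)] : Fin 3 → ℝ),
      ∀ q ∈ U, Tendsto (fun n => (VLdyn A)^[n] q) atTop
        (𝓝 ![1/(5-2*ρ), (2-ρ)/(5-2*ρ), (2-ρ)/(5-2*ρ)]) := by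
  subst hA hρ
  rw [← QuasiBabelian.smul_matrix ha.ne', VLdyn_smul _ ha.ne', QuasiBabelian.VLdyn_matrix]
  have hρ₁ : |b / a - 1| < 1 := abs_sub_lt_iff.2 ⟨by linarith, by linarith [div_pos hb ha]⟩
  exact exists_mem_nhdsWithin_tendsto_iterate (by positivity) (by linarith)
    (QuasiBabelian.eventually_mem_simplex3_and_dist_dyn_le (div_pos hb ha) hρ2)
end
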